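/- For each permutation σ in the symmetric group Σ_{n+1}, the map φ_σ is a cochain automorphism of the Aomoto complex (𝖠•(G), e_y) of the general position type G of n hyperplanes in ℂ^ℓ; that is, φ_σ is invertible and commutes with the differential given by multiplication by e_y. -/

import Mathlib

/-!
STATEMENT 11: For each permutation σ in the symmetric group Σ_{n+1}, the induced map
φ_σ is a cochain automorphism of the Aomoto complex (𝖠•(G), e_y) of the general
position type G of n hyperplanes in ℂ^ℓ: it is invertible and commutes with the
differential (multiplication by e_y).
-/


open scoped Classical

noncomputable section

/-- The coefficient ring `R = ℂ[y₁,…,y_n]`. -/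
abbrev Rpoly (n : ℕ) : Type := MvPolynomial (Fin n) ℂ

/-- Index type for the basis `{e_S}` of the degree `q` part of the rank-`ℓ`
truncation of the exterior algebra on `e₁,…,e_n`. -/
abbrev TFinset (n ℓ q : ℕ) : Type := {S : Finset (Fin n) // S.card = q ∧ q ≤ ℓ}

/-- Degree `q` part of the (rank-`ℓ` truncated) Aomoto complex, with coefficients in
a commutative `ℂ`-algebra `C`. -/
abbrev AomotoDeg (n ℓ q : ℕ) (C : Type*) : Type _ := TFinset n ℓ q → C

def posIn {n : ℕ} (j : Fin n) (S : Finset (Fin n)) : ℕ := (S.filter (· < j)).card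

variable {n ℓ : ℕ}

/-- Left multiplication by the generator `e_j`. -/
def wedgeT (C : Type*) [CommRing C] (q : ℕ) (j : Fin n) :
    AomotoDeg n ℓ q C →ₗ[C] AomotoDeg n ℓ (q + 1) C where
  toFun x V :=
    if h : j ∈ V.1 then
      ((-1 : C) ^ posIn j (V.1.erase j)) *
        x ⟨V.1.erase j, by
          refine ⟨by simp [Finset.card_erase_of_mem h, V.2.1], Nat.le_of_succ_le V.2.2⟩⟩
    else 0
  map_add' x y := by
    funext V
    by_cases h : j ∈ V.1 <;> simp [h, mul_add]
  map_smul' c x := by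
    funext V
    by_cases h : j ∈ V.1 <;> simp [h, mul_left_comm]

/-- Multiplication by `e_y = ∑ y_j ⊗ e_j`, the differential of the Aomoto complex. -/
def dAomoto (n ℓ : ℕ) (q : ℕ) :
    AomotoDeg n ℓ q (Rpoly n) →ₗ[Rpoly n] AomotoDeg n ℓ (q + 1) (Rpoly n) :=
  ∑ j : Fin n, (MvPolynomial.X j : Rpoly n) • wedgeT (C := Rpoly n) (n := n) (ℓ := ℓ) q j


/-- `E k` for `k ∈ [n+1]`: the vector of coordinates of `e_k`, with `e_{n+1} = 0`
(so that `σ(e_i) = E(σ(i)) − E(σ(n+1))` gives the `Σ_{n+1}`-action on generators). -/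
def Evec (n : ℕ) : Fin (n + 1) → (Fin n → ℂ) :=
  Fin.lastCases 0 (fun j => Pi.single j 1)

/-- The coordinates (in the basis `e₁,…,e_n`) of the image `σ(e_i)` of a generator
under `σ ∈ Σ_{n+1}`. -/
def sigVec {n : ℕ} (σ : Equiv.Perm (Fin (n + 1))) (i : Fin n) : Fin n → ℂ :=
  Evec n (σ i.castSucc) - Evec n (σ (Fin.last n))

/-- The variables `y₁,…,y_n, y_{n+1}`, with `y_{n+1} = −∑ y_j`. -/
def yImg (n : ℕ) : Fin (n + 1) → Rpoly n :=
  Fin.lastCases (-(∑ j : Fin n, MvPolynomial.X j)) MvPolynomial.X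

/-- The substitution `f(y₁,…,y_n) ↦ f(y_{σ(1)},…,y_{σ(n)})` on coefficients. -/
def tauSig {n : ℕ} (σ : Equiv.Perm (Fin (n + 1))) : Rpoly n →ₐ[ℂ] Rpoly n :=
  MvPolynomial.aeval (fun j : Fin n => yImg n (σ j.castSucc))

/-- The coefficient of `e_V` in `σ(e_{s₁}) ∧ ⋯ ∧ σ(e_{s_q})` (for `S = (s₁<…<s_q)`):
a `q × q` determinant. -/
def detCoef {n ℓ q : ℕ} (σ : Equiv.Perm (Fin (n + 1))) (S V : TFinset n ℓ q) : ℂ :=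
  Matrix.det (Matrix.of fun a b : Fin q =>
    sigVec σ ((S.1.orderIsoOfFin S.2.1 a : Fin n)) ((V.1.orderIsoOfFin V.2.1 b : Fin n)))

/-- The cochain map `φ_σ` induced by `σ ∈ Σ_{n+1}` on the Aomoto complex of the
general position arrangement:
`φ_σ(e_{i₁}⋯e_{i_p} ⊗ f(y)) = σ(e_{i₁})⋯σ(e_{i_p}) ⊗ f(y_{σ(1)},…,y_{σ(n)})`. -/
def phiSig (ℓ : ℕ) {n : ℕ} (σ : Equiv.Perm (Fin (n + 1))) (q : ℕ) :
    AomotoDeg n ℓ q (Rpoly n) →ₗ[ℂ] AomotoDeg n ℓ q (Rpoly n) :=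
  ∑ S : TFinset n ℓ q, ∑ V : TFinset n ℓ q,
    (LinearMap.single ℂ (fun _ : TFinset n ℓ q => Rpoly n) V).comp
      ((LinearMap.mulLeft ℂ (MvPolynomial.C (detCoef σ S V))).comp
        ((tauSig σ).toLinearMap.comp
          ((LinearMap.proj (R := ℂ) (φ := fun _ : TFinset n ℓ q => Rpoly n) S))))


/-- A permutation `σ_S ∈ Σ_{n+1}` sending `i ↦ s_i` (for `S = (s₁ < s₂ < ⋯ < s_k)`). -/
def sigS {n : ℕ} (S : Finset (Fin (n + 1))) : Equiv.Perm (Fin (n + 1)) :=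
  (finCongr (by simp [Finset.card_add_card_compl])).trans
    (finSumFinEquiv.symm.trans
      ((Equiv.sumCongr (S.orderIsoOfFin rfl).toEquiv ((Sᶜ).orderIsoOfFin rfl).toEquiv).trans
        ((Equiv.sumCongr (Equiv.refl _)
            (Equiv.subtypeEquivRight (fun x => Finset.mem_compl))).trans
          (Equiv.sumCompl (· ∈ S)))))

/-- The elementary linear map sending `e_W ↦ c · e_V` (and all other basis vectors
to `0`). -/
def entryMap {n ℓ q : ℕ} (c : Rpoly n) (W V : TFinset n ℓ q) :
    AomotoDeg n ℓ q (Rpoly n) →ₗ[Rpoly n] AomotoDeg n ℓ q (Rpoly n) :=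
  (LinearMap.single (Rpoly n) (fun _ : TFinset n ℓ q => Rpoly n) V).comp
    (c • LinearMap.proj W)

/-- The first `k` elements `[k] = {1,…,k}` of `[n]`, as a subset of `Fin n`. -/
def S0set (n k : ℕ) : Finset (Fin n) := Finset.univ.filter fun i => (i : ℕ) < k

/-- The part `e_T ↦ y_j ∂e_{(j,T)}` (for `S₀ ≡ (j,T)`) of the formal connection
endomorphism `ω̃_{S₀}`, `S₀ = [p+1]`, in degree `p`. -/
def omegaBase₁ (n ℓ p : ℕ) :
    AomotoDeg n ℓ p (Rpoly n) →ₗ[Rpoly n] AomotoDeg n ℓ p (Rpoly n) :=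
  ∑ V : TFinset n ℓ p,
    if V.1 ⊆ S0set n (p + 1) ∧ (S0set n (p + 1)).card = p + 1 then
      (∑ t ∈ (S0set n (p + 1) \ V.1).attach, entryMap (MvPolynomial.X t.1) V V) +
        ∑ t ∈ (S0set n (p + 1) \ V.1).attach, ∑ j ∈ V.1.attach,
          entryMap
            (((-1 : Rpoly n) ^
                (posIn t.1 (insert t.1 (V.1.erase j.1)) + 1 + posIn j.1 (V.1.erase j.1))) *
              MvPolynomial.X j.1)
            ⟨insert t.1 (V.1.erase j.1), by
              have ht : t.1 ∉ V.1.erase j.1 := fun hc =>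
                (Finset.mem_sdiff.mp t.2).2 (Finset.mem_of_mem_erase hc)
              have hj : j.1 ∈ V.1 := j.2
              have hp : 1 ≤ p := by
                have h0 := Finset.card_pos.mpr ⟨j.1, hj⟩
                rw [V.2.1] at h0
                omega
              refine ⟨?_, V.2.2⟩
              rw [Finset.card_insert_of_notMem ht, Finset.card_erase_of_mem hj, V.2.1]
              omega⟩
            V
    else 0


/-- The part `e_T ↦ e_y ∂e_T` (for `S₀ ≡ T`) of the formal connection endomorphism
`ω̃_{S₀}`, `S₀ = [p]`, in degree `p`. -/
def omegaBase₂ (n ℓ p : ℕ) :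
    AomotoDeg n ℓ p (Rpoly n) →ₗ[Rpoly n] AomotoDeg n ℓ p (Rpoly n) :=
  if hc : (S0set n p).card = p then
    ∑ V : TFinset n ℓ p,
      entryMap
        (∑ u ∈ (S0set n p).attach, ∑ j ∈ V.1.attach,
          if V.1.erase j.1 = (S0set n p).erase u.1 then
            ((-1 : Rpoly n) ^
                (posIn u.1 ((S0set n p).erase u.1) + posIn j.1 ((S0set n p).erase u.1))) *
              MvPolynomial.X j.1
          else 0)
        ⟨S0set n p, hc, V.2.2⟩ V
  else 0

/-- The formal connection endomorphism `ω̃_{S₀}` for `S₀ = [q+1]`, in degree `p`: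
`ω̃^p_{S₀}(e_T) = y_j ∂e_{(j,T)}` if `p = q` and `S₀ ≡ (j,T)`;
`ω̃^p_{S₀}(e_T) = e_y ∂e_T` if `p = q+1` and `S₀ ≡ T`; and `0` otherwise. -/
def omegaBase (n ℓ : ℕ) (q p : ℕ) :
    AomotoDeg n ℓ p (Rpoly n) →ₗ[Rpoly n] AomotoDeg n ℓ p (Rpoly n) :=
  if p = q then omegaBase₁ n ℓ p else if p = q + 1 then omegaBase₂ n ℓ p else 0

/-- The formal connection endomorphism `ω̃_S` of the Aomoto complex of the general
position arrangement, for `S ⊆ [n+1]` of cardinality `q+1`: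
`ω̃_S = φ_{σ_S} ∘ ω̃_{[q+1]} ∘ φ_{σ_S}⁻¹`. -/
def omegaS (ℓ : ℕ) {n : ℕ} (S : Finset (Fin (n + 1))) (p : ℕ) :
    AomotoDeg n ℓ p (Rpoly n) →ₗ[ℂ] AomotoDeg n ℓ p (Rpoly n) :=
  (phiSig ℓ (sigS S) p).comp
    (((omegaBase n ℓ (S.card - 1) p).restrictScalars ℂ).comp
      (phiSig ℓ (sigS S)⁻¹ p))

end

/-!
In the basis `e_S`, `φ_σ` first substitutes `y_j ↦ y_{σ(j)}` in the coefficients (`tauSig σ`)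
and then applies `⋀^q g_σ`, where `g_σ(e_i) = σ(e_i)`; the matrix entries of `⋀^q g_σ` are the
`q × q` minors of the matrix `sigMatrix σ` of `g_σ`. Since `σ ↦ g_σ` and `σ ↦ tauSig σ` are
actions, Cauchy–Binet gives `φ_σ ∘ φ_τ = φ_{στ}`, so `φ_σ` is invertible with inverse `φ_{σ⁻¹}`.

For the differential, `⋀^{q+1} A (v ∧ x) = (v A) ∧ ⋀^q A x` for any matrix `A`: in coordinates
both sides are the expansion along its first row of the determinant bordered by the row `v A`
(by multilinearity on one side, by Laplace on the other). Applied to `A = sigMatrix σ` and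
`v_j = tauSig σ (y_j) = y_{σ(j)}`, it remains to see `∑_j y_{σ(j)} σ(e_j) = ∑_j y_j e_j`, which
holds because `∑_{k ≤ n+1} y_k = 0`.
-/

theorem Fintype.sum_dite_zero_eq_sum_subtype {ι M : Type*} [Fintype ι] [AddCommMonoid M]
    (p : ι → Prop) [DecidablePred p] (f : ∀ i, p i → M) :
    (∑ i, if h : p i then f i h else 0) = ∑ i : Subtype p, f i i.2 := by
  rw [← Finset.sum_filter_of_ne (p := p) fun i _ h => by by_contra hp; exact h (dif_neg hp),
    Finset.sum_subtype (p := p) _ (fun _ => by simp)]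
  exact Finset.sum_congr rfl fun i _ => dif_pos i.2

namespace Finset

variable {α : Type*} [LinearOrder α]

theorem card_filter_lt_orderEmbOfFin (s : Finset α) {k : ℕ} (h : s.card = k) (i : Fin k) :
    #{x ∈ s | x < s.orderEmbOfFin h i} = i := by
  have himage : {x ∈ s | x < s.orderEmbOfFin h i} =
      (Iio i).map (s.orderEmbOfFin h).toEmbedding := by
    ext x
    simp only [mem_filter, mem_map, mem_Iio, RelEmbedding.coe_toEmbedding]
    constructor
    · rintro ⟨hx, hlt⟩
      obtain ⟨a, rfl⟩ : x ∈ Set.range (s.orderEmbOfFin h) := by rwa [range_orderEmbOfFin]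
      exact ⟨a, (s.orderEmbOfFin h).lt_iff_lt.mp hlt, rfl⟩
    · rintro ⟨a, ha, rfl⟩
      exact ⟨orderEmbOfFin_mem s h a, (s.orderEmbOfFin h).lt_iff_lt.mpr ha⟩
  rw [himage, card_map, Fin.card_Iio]

theorem orderEmbOfFin_erase (s : Finset α) {k : ℕ} (h : s.card = k + 1) (i : Fin (k + 1))
    (h' : (s.erase (s.orderEmbOfFin h i)).card = k) :
    ⇑((s.erase (s.orderEmbOfFin h i)).orderEmbOfFin h') = s.orderEmbOfFin h ∘ i.succAbove := by
  refine (orderEmbOfFin_unique h' (fun c => ?_) ?_).symm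
  · exact mem_erase.mpr ⟨(s.orderEmbOfFin h).injective.ne (i.succAbove_ne c),
      orderEmbOfFin_mem s h _⟩
  · exact (s.orderEmbOfFin h).strictMono.comp i.strictMono_succAbove

theorem orderEmbOfFin_congr {s t : Finset α} (hst : s = t) {k : ℕ} (hs : s.card = k)
    (ht : t.card = k) : s.orderEmbOfFin hs = t.orderEmbOfFin ht := by
  subst hst; rfl

theorem sum_dite_mem_univ_eq_sum_orderEmbOfFin [Fintype α] {M : Type*} [AddCommMonoid M]
    (s : Finset α) {k : ℕ} (hs : s.card = k) (f : ∀ a, a ∈ s → M) :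
    (∑ a, if h : a ∈ s then f a h else 0) =
      ∑ i : Fin k, f (s.orderEmbOfFin hs i) (orderEmbOfFin_mem s hs i) := by
  have hmap := sum_map univ (s.orderEmbOfFin hs).toEmbedding
    fun a => if h : a ∈ s then f a h else 0
  rw [map_orderEmbOfFin_univ] at hmap
  rw [← sum_subset (subset_univ s) fun a _ ha => dif_neg ha, hmap]
  exact sum_congr rfl fun i _ => dif_pos _

/-- Listing `insert a s` in increasing order moves `a` from the front to its position `i`. -/
theorem cons_orderEmbOfFin_eq_comp_cycleRange {s : Finset α} {a : α} (ha : a ∉ s) {k : ℕ}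
    (hs : s.card = k) (h : (insert a s).card = k + 1) (i : Fin (k + 1))
    (hi : (i : ℕ) = #{x ∈ s | x < a}) :
    Fin.cons a (s.orderEmbOfFin hs) = (insert a s).orderEmbOfFin h ∘ i.cycleRange.symm := by
  set e := (insert a s).orderEmbOfFin h
  set j := ((insert a s).orderIsoOfFin h).symm ⟨a, mem_insert_self a s⟩
  have hea : e j = a := by
    simp only [e, j, ← coe_orderIsoOfFin_apply, OrderIso.apply_symm_apply]
  have hji : j = i := Fin.ext <| by
    rw [hi, ← card_filter_lt_orderEmbOfFin (insert a s) h j, hea, filter_insert,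
      if_neg (lt_irrefl a)]
  have hs' : ((insert a s).erase (e j)).card = k := by rw [hea, erase_insert ha, hs]
  have hrest : ⇑(s.orderEmbOfFin hs) = e ∘ j.succAbove := by
    rw [← orderEmbOfFin_erase _ h j hs',
      orderEmbOfFin_congr (by rw [hea, erase_insert ha]) hs hs']
  rw [← hji, ← Fin.cons_removeNth_eq_comp_cycleRange_symm, hea, hrest]
  rfl

end Finset

namespace Matrix

open Finset Set.powersetCard

variable {R : Type*} [CommRing R] {l m p : Type*} {q : ℕ}

theorem det_of_cons (r : Fin (q + 1) → R) (B : Matrix (Fin q) (Fin (q + 1)) R) :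
    (of (Fin.cons r B)).det =
      ∑ b : Fin (q + 1), (-1) ^ (b : ℕ) * r b * (B.submatrix id b.succAbove).det :=
  det_succ_row_zero _

theorem det_of_cons_vecMul_submatrix [Fintype l] (A : Matrix l m R) (c : l → R)
    (t : Fin q → l) (w : Fin (q + 1) → m) :
    (of (Fin.cons ((c ᵥ* A) ∘ w) (A.submatrix t w))).det =
      ∑ j, c j * (A.submatrix (Fin.cons j t) w).det := by
  have hcons : ∀ j, A.submatrix (Fin.cons j t) w = of (Fin.cons (A j ∘ w) (A.submatrix t w)) :=
    fun j => by ext i k; cases i using Fin.cases <;> rfl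
  simp only [hcons, det_of_cons, Finset.mul_sum]
  rw [Finset.sum_comm]
  refine Finset.sum_congr rfl fun b _ => ?_
  simp only [Function.comp_apply, vecMul, dotProduct, Finset.mul_sum, Finset.sum_mul]
  exact Finset.sum_congr rfl fun _ _ => by ring

variable [LinearOrder l]

theorem det_submatrix_cons_of_mem (A : Matrix l m R) {j : l} {T : Set.powersetCard l q}
    (hj : j ∈ T.val) (w : Fin (q + 1) → m) :
    (A.submatrix (Fin.cons j (T.val.orderEmbOfFin (card_eq T))) w).det = 0 := by
  obtain ⟨a, rfl⟩ : j ∈ Set.range (T.val.orderEmbOfFin (card_eq T)) := by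
    rwa [Finset.range_orderEmbOfFin]
  exact det_zero_of_row_eq (Fin.succ_ne_zero a).symm rfl

variable [LinearOrder m] [LinearOrder p]

noncomputable def minor (A : Matrix l m R) (S : Set.powersetCard l q)
    (U : Set.powersetCard m q) : R :=
  (A.submatrix (S.val.orderEmbOfFin (card_eq S)) (U.val.orderEmbOfFin (card_eq U))).det

theorem minor_map {S F : Type*} [CommRing S] [FunLike F R S] [RingHomClass F R S] (f : F)
    (A : Matrix l m R) (T : Set.powersetCard l q) (U : Set.powersetCard m q) :
    (A.map f).minor T U = f (A.minor T U) :=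
  (RingHom.map_det (f : R →+* S) _).symm

theorem minor_eq_det_submatrix_succAbove (A : Matrix l m R) (T : Set.powersetCard l q)
    (W : Set.powersetCard m (q + 1)) (b : Fin (q + 1)) (U : Set.powersetCard m q)
    (hU : U.val = W.val.erase (W.val.orderEmbOfFin (card_eq W) b)) :
    A.minor T U = (A.submatrix (T.val.orderEmbOfFin (card_eq T))
      (W.val.orderEmbOfFin (card_eq W) ∘ b.succAbove)).det := by
  rw [minor, Finset.orderEmbOfFin_congr hU (card_eq U) (hU ▸ card_eq U),
    Finset.orderEmbOfFin_erase]

theorem det_submatrix_cons_of_notMem (A : Matrix l m R) {j : l} {T : Set.powersetCard l q}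
    (hj : j ∉ T.val) (S : Set.powersetCard l (q + 1)) (hS : S.val = insert j T.val)
    (U : Set.powersetCard m (q + 1)) :
    (A.submatrix (Fin.cons j (T.val.orderEmbOfFin (card_eq T)))
      (U.val.orderEmbOfFin (card_eq U))).det = (-1) ^ #{x ∈ T.val | x < j} * A.minor S U := by
  set i : Fin (q + 1) :=
    ⟨#{x ∈ T.val | x < j}, Nat.lt_succ_of_le ((card_filter_le _ _).trans_eq (card_eq T))⟩
  have hcard : (insert j T.val).card = q + 1 := by rw [← hS]; exact card_eq S
  rw [Finset.cons_orderEmbOfFin_eq_comp_cycleRange hj (card_eq T) hcard i rfl,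
    ← Finset.orderEmbOfFin_congr hS (card_eq S)]
  change ((A.submatrix (S.val.orderEmbOfFin (card_eq S))
    (U.val.orderEmbOfFin (card_eq U))).submatrix i.cycleRange.symm id).det = _
  rw [det_permute, Equiv.Perm.sign_symm, Fin.sign_cycleRange]
  simp [minor, i]

variable [Fintype l] [Fintype m] [Fintype p]

theorem exteriorPower_repr_map_vecMulLinear (A : Matrix l m R) (S : Set.powersetCard l q)
    (U : Set.powersetCard m q) :
    ((Pi.basisFun R m).exteriorPower q).repr
      (exteriorPower.map q A.vecMulLinear ((Pi.basisFun R l).exteriorPower q S)) U =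
      A.minor S U := by
  rw [exteriorPower.basis_apply, exteriorPower.map_apply_ιMulti_family,
    exteriorPower.basis_repr_apply, exteriorPower.ιMulti_family,
    exteriorPower.ιMultiDual_apply_ιMulti]
  simp [minor, Matrix.submatrix, Set.powersetCard.ofFinEmbEquiv_symm_apply]

/-- Cauchy–Binet, from the functoriality of `⋀^q`. -/
theorem minor_mul (A : Matrix l m R) (B : Matrix m p R) (S : Set.powersetCard l q)
    (U : Set.powersetCard p q) :
    (A * B).minor S U = ∑ V : Set.powersetCard m q, A.minor S V * B.minor V U := by
  have hcomp : (A * B).vecMulLinear = B.vecMulLinear ∘ₗ A.vecMulLinear :=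
    LinearMap.ext fun v => (vecMul_vecMul v A B).symm
  rw [← exteriorPower_repr_map_vecMulLinear, hcomp, exteriorPower.map_comp, LinearMap.comp_apply,
    ← ((Pi.basisFun R m).exteriorPower q).sum_repr
      (exteriorPower.map q A.vecMulLinear ((Pi.basisFun R l).exteriorPower q S))]
  simp only [map_sum, map_smul, Finsupp.coe_finsetSum, Finset.sum_apply, Finsupp.coe_smul,
    Pi.smul_apply, smul_eq_mul, exteriorPower_repr_map_vecMulLinear]

theorem minor_one (S U : Set.powersetCard l q) :
    (1 : Matrix l l R).minor S U = if S = U then 1 else 0 := by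
  have hid : (1 : Matrix l l R).vecMulLinear = LinearMap.id :=
    LinearMap.ext fun v => vecMul_one v
  rw [← exteriorPower_repr_map_vecMulLinear, hid, exteriorPower.map_id, LinearMap.id_apply,
    Module.Basis.repr_self, Finsupp.single_apply]

end Matrix

theorem posIn_erase {n : ℕ} (j : Fin n) (S : Finset (Fin n)) :
    posIn j (S.erase j) = posIn j S := by
  rw [posIn, posIn, Finset.filter_erase, Finset.erase_eq_of_notMem (by simp)]

namespace TFinset

variable {n ℓ q : ℕ}

def toPowersetCard (S : TFinset n ℓ q) : Set.powersetCard (Fin n) q := ⟨S.1, S.2.1⟩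

def equivPowersetCard (hq : q ≤ ℓ) : TFinset n ℓ q ≃ Set.powersetCard (Fin n) q where
  toFun := toPowersetCard
  invFun P := ⟨P.1, Set.powersetCard.card_eq P, hq⟩
  left_inv _ := rfl
  right_inv _ := rfl

theorem sum_toPowersetCard {M : Type*} [AddCommMonoid M] (hq : q ≤ ℓ)
    (f : Set.powersetCard (Fin n) q → M) :
    ∑ S : TFinset n ℓ q, f (toPowersetCard S) = ∑ P, f P :=
  Fintype.sum_equiv (equivPowersetCard hq) _ _ fun _ => rfl

def erase (W : TFinset n ℓ (q + 1)) {j : Fin n} (h : j ∈ W.1) : TFinset n ℓ q :=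
  ⟨W.1.erase j, by rw [Finset.card_erase_of_mem h, W.2.1, Nat.add_sub_cancel],
    Nat.le_of_succ_le W.2.2⟩

def cons (j : Fin n) (T : TFinset n ℓ q) (h : j ∉ T.1) (hq : q + 1 ≤ ℓ) : TFinset n ℓ (q + 1) :=
  ⟨Finset.cons j T.1 h, by rw [Finset.card_cons, T.2.1], hq⟩

def eraseEquiv (j : Fin n) (hq : q + 1 ≤ ℓ) :
    {S : TFinset n ℓ (q + 1) // j ∈ S.1} ≃ {T : TFinset n ℓ q // j ∉ T.1} where
  toFun S := ⟨erase S.1 S.2, Finset.notMem_erase j _⟩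
  invFun T := ⟨cons j T.1 T.2 hq, @Finset.mem_cons_self _ j T.1.1 T.2⟩
  left_inv S := by
    apply Subtype.ext; apply Subtype.ext
    simp [erase, cons, Finset.insert_erase S.2]
  right_inv T := by
    apply Subtype.ext; apply Subtype.ext
    simp [erase, cons, Finset.erase_insert T.2]

theorem sum_dite_mem_eq_sum_dite_notMem {M : Type*} [AddCommMonoid M] (j : Fin n)
    (hq : q + 1 ≤ ℓ) (G : TFinset n ℓ q → TFinset n ℓ (q + 1) → M) :
    (∑ S : TFinset n ℓ (q + 1), if h : j ∈ S.1 then G (erase S h) S else 0) =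
      ∑ T : TFinset n ℓ q, if h : j ∉ T.1 then G T (cons j T h hq) else 0 := by
  rw [Fintype.sum_dite_zero_eq_sum_subtype, Fintype.sum_dite_zero_eq_sum_subtype]
  refine Fintype.sum_equiv (eraseEquiv j hq) _ _ fun S => ?_
  change G (eraseEquiv j hq S).1 S.1 =
    G (eraseEquiv j hq S).1 ((eraseEquiv j hq).symm (eraseEquiv j hq S)).1
  rw [Equiv.symm_apply_apply]

end TFinset

open TFinset

section Coordinates

open Matrix

variable {n ℓ q : ℕ} {C D : Type*} [CommRing C] [CommRing D]

def wedgeLeft (v : Fin n → C) (q : ℕ) : AomotoDeg n ℓ q C →ₗ[C] AomotoDeg n ℓ (q + 1) C :=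
  ∑ j, v j • wedgeT C q j

theorem wedgeLeft_apply (v : Fin n → C) (x : AomotoDeg n ℓ q C) (W : TFinset n ℓ (q + 1)) :
    wedgeLeft v q x W = ∑ j, if h : j ∈ W.1 then
      v j * ((-1) ^ posIn j (W.1.erase j) * x (erase W h)) else 0 := by
  simp only [wedgeLeft, LinearMap.coe_sum, Finset.sum_apply, LinearMap.smul_apply,
    Pi.smul_apply, smul_eq_mul]
  refine Finset.sum_congr rfl fun j _ => ?_
  by_cases h : j ∈ W.1 <;> simp [wedgeT, h, erase]

theorem wedgeLeft_apply_eq_sum_fin (v : Fin n → C) (x : AomotoDeg n ℓ q C)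
    (W : TFinset n ℓ (q + 1)) :
    wedgeLeft v q x W = ∑ b : Fin (q + 1), (-1) ^ (b : ℕ) * v (W.1.orderEmbOfFin W.2.1 b) *
      x (erase W (W.1.orderEmbOfFin_mem W.2.1 b)) := by
  rw [wedgeLeft_apply, Finset.sum_dite_mem_univ_eq_sum_orderEmbOfFin _ W.2.1]
  refine Finset.sum_congr rfl fun b _ => ?_
  rw [posIn_erase, posIn, Finset.card_filter_lt_orderEmbOfFin]
  ring

theorem map_wedgeLeft {F : Type*} [FunLike F C D] [RingHomClass F C D] (f : F)
    (v : Fin n → C) (x : AomotoDeg n ℓ q C) :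
    f ∘ wedgeLeft v q x = wedgeLeft (f ∘ v) q (f ∘ x) := by
  funext W
  simp [wedgeLeft_apply, map_sum, apply_dite f]

/-- `⋀^q` of the endomorphism `e_i ↦ ∑_u A i u • e_u`, in the basis `e_S`. -/
noncomputable def minorAction (A : Matrix (Fin n) (Fin n) C) (x : AomotoDeg n ℓ q C) :
    AomotoDeg n ℓ q C :=
  fun U => ∑ S, A.minor (toPowersetCard S) (toPowersetCard U) * x S

theorem wedgeLeft_minorAction_apply (A : Matrix (Fin n) (Fin n) C) (r : Fin n → C)
    (x : AomotoDeg n ℓ q C) (W : TFinset n ℓ (q + 1)) :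
    wedgeLeft r q (minorAction A x) W = ∑ T : TFinset n ℓ q,
      (of (Fin.cons (r ∘ W.1.orderEmbOfFin W.2.1)
        (A.submatrix (T.1.orderEmbOfFin T.2.1) (W.1.orderEmbOfFin W.2.1)))).det * x T := by
  have hminor : ∀ (T : TFinset n ℓ q) b, A.minor (toPowersetCard T)
      (toPowersetCard (erase W (W.1.orderEmbOfFin_mem W.2.1 b))) =
        ((A.submatrix (T.1.orderEmbOfFin T.2.1) (W.1.orderEmbOfFin W.2.1)).submatrix id
          b.succAbove).det :=
    fun T b => A.minor_eq_det_submatrix_succAbove _ (toPowersetCard W) b _ rfl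
  simp only [wedgeLeft_apply_eq_sum_fin, minorAction, hminor, Finset.mul_sum, det_of_cons,
    Finset.sum_mul]
  rw [Finset.sum_comm]
  exact Finset.sum_congr rfl fun T _ => Finset.sum_congr rfl fun b _ => by
    simp only [Function.comp_apply]; ring

theorem minorAction_wedgeLeft_apply (A : Matrix (Fin n) (Fin n) C) (v : Fin n → C)
    (x : AomotoDeg n ℓ q C) (W : TFinset n ℓ (q + 1)) :
    minorAction A (wedgeLeft v q x) W = ∑ T : TFinset n ℓ q,
      (of (Fin.cons ((v ᵥ* A) ∘ W.1.orderEmbOfFin W.2.1)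
        (A.submatrix (T.1.orderEmbOfFin T.2.1) (W.1.orderEmbOfFin W.2.1)))).det * x T := by
  have hsign : ∀ (T : TFinset n ℓ q) j (h : j ∉ T.1),
      (-1) ^ posIn j T.1 * A.minor (toPowersetCard (cons j T h W.2.2)) (toPowersetCard W) =
        (A.submatrix (Fin.cons j (T.1.orderEmbOfFin T.2.1)) (W.1.orderEmbOfFin W.2.1)).det :=
    fun T j h => (A.det_submatrix_cons_of_notMem (T := toPowersetCard T) h
      (toPowersetCard (cons j T h W.2.2)) (Finset.cons_eq_insert j T.1 h)
      (toPowersetCard W)).symm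
  calc minorAction A (wedgeLeft v q x) W
      = ∑ j, ∑ S : TFinset n ℓ (q + 1), if h : j ∈ S.1 then
          v j * (-1) ^ posIn j (S.1.erase j) * A.minor (toPowersetCard S) (toPowersetCard W) *
            x (erase S h) else 0 := by
        simp only [minorAction, wedgeLeft_apply, Finset.mul_sum]
        rw [Finset.sum_comm]
        refine Finset.sum_congr rfl fun S _ => Finset.sum_congr rfl fun j _ => ?_
        split_ifs <;> ring
    _ = ∑ j, ∑ T : TFinset n ℓ q, if h : j ∉ T.1 then
          v j * (-1) ^ posIn j T.1 * A.minor (toPowersetCard (cons j T h W.2.2))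
            (toPowersetCard W) * x T else 0 :=
        Finset.sum_congr rfl fun j _ => TFinset.sum_dite_mem_eq_sum_dite_notMem j W.2.2
          fun T S => v j * (-1) ^ posIn j T.1 * A.minor (toPowersetCard S) (toPowersetCard W) * x T
    _ = ∑ T : TFinset n ℓ q, ∑ j, v j *
          (A.submatrix (Fin.cons j (T.1.orderEmbOfFin T.2.1)) (W.1.orderEmbOfFin W.2.1)).det *
            x T := by
        rw [Finset.sum_comm]
        refine Finset.sum_congr rfl fun T _ => Finset.sum_congr rfl fun j _ => ?_
        split_ifs with h
        · rw [show (A.submatrix (Fin.cons j (T.1.orderEmbOfFin T.2.1))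
            (W.1.orderEmbOfFin W.2.1)).det = 0 from
              A.det_submatrix_cons_of_mem (T := toPowersetCard T) h _]
          ring
        · rw [← hsign T j h]; ring
    _ = _ := Finset.sum_congr rfl fun T _ => by
        rw [det_of_cons_vecMul_submatrix, Finset.sum_mul]

theorem minorAction_wedgeLeft (A : Matrix (Fin n) (Fin n) C) (v : Fin n → C)
    (x : AomotoDeg n ℓ q C) :
    minorAction A (wedgeLeft v q x) = wedgeLeft (v ᵥ* A) q (minorAction A x) :=
  funext fun W => (minorAction_wedgeLeft_apply A v x W).trans
    (wedgeLeft_minorAction_apply A _ x W).symm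

theorem minorAction_minorAction (A B : Matrix (Fin n) (Fin n) C) (x : AomotoDeg n ℓ q C) :
    minorAction B (minorAction A x) = minorAction (A * B) x := by
  funext U
  simp only [minorAction, minor_mul, Finset.mul_sum, Finset.sum_mul]
  rw [Finset.sum_comm]
  refine Finset.sum_congr rfl fun S _ => ?_
  rw [← TFinset.sum_toPowersetCard U.2.2]
  exact Finset.sum_congr rfl fun V _ => by ring

theorem minorAction_one (x : AomotoDeg n ℓ q C) : minorAction 1 x = x := by
  funext U
  have hinj : ∀ S, toPowersetCard S = toPowersetCard U ↔ S = U := fun _ =>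
    (equivPowersetCard U.2.2).injective.eq_iff
  simp [minorAction, minor_one, hinj]

theorem map_minorAction {F : Type*} [FunLike F C D] [RingHomClass F C D] (f : F)
    (A : Matrix (Fin n) (Fin n) C) (x : AomotoDeg n ℓ q C) :
    f ∘ minorAction A x = minorAction (A.map f) (f ∘ x) := by
  funext U
  simp [minorAction, minor_map]

end Coordinates
section Symmetric

open Matrix MvPolynomial

variable {n ℓ : ℕ}

def sigMatrix (σ : Equiv.Perm (Fin (n + 1))) : Matrix (Fin n) (Fin n) ℂ := of (sigVec σ)

theorem sum_Evec_mul_sigVec (σ : Equiv.Perm (Fin (n + 1))) (k : Fin (n + 1)) (u : Fin n) :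
    ∑ m, Evec n k m * sigVec σ m u = Evec n (σ k) u - Evec n (σ (Fin.last n)) u := by
  induction k using Fin.lastCases with
  | last => simp [Evec]
  | cast j =>
    rw [Finset.sum_eq_single j (fun m _ hm => by simp [Evec, hm]) (by simp)]
    simp [sigVec, Evec]

theorem sigMatrix_mul (σ τ : Equiv.Perm (Fin (n + 1))) :
    sigMatrix (σ * τ) = sigMatrix τ * sigMatrix σ := by
  ext i u
  have hτ : ∀ m, sigVec τ i m = Evec n (τ i.castSucc) m - Evec n (τ (Fin.last n)) m :=
    fun _ => rfl
  simp only [sigMatrix, mul_apply, of_apply, hτ, sub_mul, Finset.sum_sub_distrib,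
    sum_Evec_mul_sigVec]
  simp only [sigVec, Pi.sub_apply, Equiv.Perm.mul_apply]
  ring

theorem sigMatrix_one : sigMatrix (1 : Equiv.Perm (Fin (n + 1))) = 1 := by
  ext i u
  simp [sigMatrix, sigVec, Evec, one_apply, Pi.single_apply, eq_comm]

theorem sum_yImg : ∑ k, yImg n k = 0 := by
  simp [Fin.sum_univ_castSucc, yImg]

theorem tauSig_X (σ : Equiv.Perm (Fin (n + 1))) (j : Fin n) :
    tauSig σ (X j) = yImg n (σ j.castSucc) := by
  simp [tauSig]

theorem tauSig_yImg (σ : Equiv.Perm (Fin (n + 1))) (k : Fin (n + 1)) :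
    tauSig σ (yImg n k) = yImg n (σ k) := by
  induction k using Fin.lastCases with
  | last =>
    have h := sum_yImg (n := n)
    rw [← Equiv.sum_comp σ, Fin.sum_univ_castSucc] at h
    rw [show yImg n (Fin.last n) = -∑ j, X j from Fin.lastCases_last, map_neg, map_sum]
    simp only [tauSig_X]
    linear_combination -h
  | cast j => simp [yImg, tauSig]

theorem tauSig_mul (σ τ : Equiv.Perm (Fin (n + 1))) :
    (tauSig σ).comp (tauSig τ) = tauSig (σ * τ) :=
  algHom_ext fun j => by simp [tauSig_X, tauSig_yImg]

theorem tauSig_one : tauSig (1 : Equiv.Perm (Fin (n + 1))) = AlgHom.id ℂ (Rpoly n) :=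
  algHom_ext fun j => by simp [tauSig_X, yImg]

theorem detCoef_eq_minor (σ : Equiv.Perm (Fin (n + 1))) {q : ℕ} (S U : TFinset n ℓ q) :
    detCoef σ S U = (sigMatrix σ).minor (toPowersetCard S) (toPowersetCard U) :=
  rfl

theorem phiSig_eq_minorAction (σ : Equiv.Perm (Fin (n + 1))) {q : ℕ}
    (x : AomotoDeg n ℓ q (Rpoly n)) :
    phiSig ℓ σ q x = minorAction ((sigMatrix σ).map C) (tauSig σ ∘ x) := by
  funext U
  simp only [phiSig, LinearMap.coe_sum, Finset.sum_apply, LinearMap.coe_comp, Function.comp_apply,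
    LinearMap.coe_single, LinearMap.mulLeft_apply, AlgHom.toLinearMap_apply, LinearMap.proj_apply,
    minorAction, minor_map]
  refine Finset.sum_congr rfl fun S _ => ?_
  simp [Finset.sum_pi_single, detCoef_eq_minor]

theorem phiSig_mul (σ τ : Equiv.Perm (Fin (n + 1))) {q : ℕ} (x : AomotoDeg n ℓ q (Rpoly n)) :
    phiSig ℓ σ q (phiSig ℓ τ q x) = phiSig ℓ (σ * τ) q x := by
  have hconst : ((sigMatrix τ).map C).map (tauSig σ) = (sigMatrix τ).map C := by
    ext; simp
  rw [phiSig_eq_minorAction, phiSig_eq_minorAction, phiSig_eq_minorAction,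
    map_minorAction (tauSig σ), hconst, minorAction_minorAction,
    ← Matrix.map_mul, ← sigMatrix_mul, ← tauSig_mul]
  rfl

theorem phiSig_one {q : ℕ} (x : AomotoDeg n ℓ q (Rpoly n)) :
    phiSig ℓ (1 : Equiv.Perm (Fin (n + 1))) q x = x := by
  rw [phiSig_eq_minorAction, sigMatrix_one, Matrix.map_one _ (map_zero C) (map_one C), tauSig_one]
  exact minorAction_one x

theorem phiSig_bijective (σ : Equiv.Perm (Fin (n + 1))) (q : ℕ) :
    Function.Bijective (phiSig ℓ σ q) :=
  Function.bijective_iff_has_inverse.mpr ⟨phiSig ℓ σ⁻¹ q,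
    fun x => by rw [phiSig_mul, inv_mul_cancel, phiSig_one],
    fun x => by rw [phiSig_mul, mul_inv_cancel, phiSig_one]⟩

theorem sum_yImg_mul_Evec (u : Fin n) : ∑ k, yImg n k * C (Evec n k u) = X u := by
  simp [Fin.sum_univ_castSucc, yImg, Evec, Pi.single_apply]

theorem yImg_vecMul_sigMatrix (σ : Equiv.Perm (Fin (n + 1))) :
    (fun j : Fin n => yImg n (σ j.castSucc)) ᵥ* (sigMatrix σ).map C = X := by
  funext u
  have h := sum_yImg (n := n)
  rw [← Equiv.sum_comp σ, Fin.sum_univ_castSucc] at h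
  rw [← sum_yImg_mul_Evec u, ← Equiv.sum_comp σ, Fin.sum_univ_castSucc]
  simp only [vecMul, dotProduct, map_apply, sigMatrix, of_apply, sigVec, Pi.sub_apply, map_sub,
    mul_sub, Finset.sum_sub_distrib, ← Finset.sum_mul]
  linear_combination (-C (Evec n (σ (Fin.last n)) u)) * h

theorem dAomoto_eq_wedgeLeft (q : ℕ) : dAomoto n ℓ q = wedgeLeft X q :=
  rfl

theorem dAomoto_phiSig (σ : Equiv.Perm (Fin (n + 1))) {q : ℕ} (x : AomotoDeg n ℓ q (Rpoly n)) :
    dAomoto n ℓ q (phiSig ℓ σ q x) = phiSig ℓ σ (q + 1) (dAomoto n ℓ q x) := by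
  have hX : tauSig σ ∘ (X : Fin n → Rpoly n) = fun j => yImg n (σ j.castSucc) :=
    funext (tauSig_X σ)
  rw [dAomoto_eq_wedgeLeft, phiSig_eq_minorAction, phiSig_eq_minorAction, map_wedgeLeft,
    minorAction_wedgeLeft, hX, yImg_vecMul_sigMatrix]

end Symmetric

/-- **Lemma (Cohen–Orlik).** For each `σ ∈ Σ_{n+1}` the map `φ_σ` is a cochain
automorphism of the Aomoto complex `(𝖠^•(G), e_y)` of the general position type:
it is bijective in each degree and commutes with the differential. -/
theorem phiSig_is_cochain_automorphism (n ℓ : ℕ) (σ : Equiv.Perm (Fin (n + 1))) :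
    (∀ q : ℕ, Function.Bijective (phiSig ℓ σ q)) ∧
    (∀ q : ℕ, ∀ x : AomotoDeg n ℓ q (Rpoly n),
      dAomoto n ℓ q (phiSig ℓ σ q x) = phiSig ℓ σ (q + 1) (dAomoto n ℓ q x)) :=
  ⟨phiSig_bijective σ, fun _ x => dAomoto_phiSig σ x⟩
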